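/- arXiv:1507.04061 — 9 statements merged into one kernel-verified Lean document; each statement's English description precedes it below -/
import Mathlib

section
/- If (V,*,γ) is a hom-right-symmetric algebra, then the commutator bracket [x,y] := x*y − y*x makes (V,[·,·],γ) a hom-Lie algebra, i.e., γ preserves the bracket and the hom-Jacobi identity [γ(x),[y,z]] + [γ(y),[z,x]] + [γ(z),[x,y]] = 0 holds. -/
/-- If `(V, *, γ)` is a hom-right-symmetric algebra, then the commutator bracket
`[x,y] := x*y - y*x` makes `(V, [·,·], γ)` a hom-Lie algebra: `γ` preserves the
bracket and the hom-Jacobi identity holds. -/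
theorem hom_right_symmetric_to_hom_lie
    {K V : Type*} [Field K] [AddCommGroup V] [Module K V]
    (mul : V →ₗ[K] V →ₗ[K] V) (γ : V →ₗ[K] V)
    (hγ : ∀ x y : V, γ (mul x y) = mul (γ x) (γ y))
    (hrs : ∀ x y z : V,
      mul (mul x y) (γ z) - mul (γ x) (mul y z)
        = mul (mul x z) (γ y) - mul (γ x) (mul z y)) :
    (∀ x y : V, γ (mul x y - mul y x) = mul (γ x) (γ y) - mul (γ y) (γ x)) ∧
    (∀ x y z : V,
      (mul (γ x) (mul y z - mul z y) - mul (mul y z - mul z y) (γ x)) +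
      (mul (γ y) (mul z x - mul x z) - mul (mul z x - mul x z) (γ y)) +
      (mul (γ z) (mul x y - mul y x) - mul (mul x y - mul y x) (γ z)) = 0) := by
  constructor
  · intro x y
    rw [map_sub, hγ, hγ]
  · intro x y z
    have h1 := hrs x y z
    have h2 := hrs y z x
    have h3 := hrs z x y
    simp only [map_sub, LinearMap.sub_apply] at *
    have e :
        (mul (γ x) (mul y z) - mul (γ x) (mul z y) -
            (mul (mul y z) (γ x) - mul (mul z y) (γ x))) +
        (mul (γ y) (mul z x) - mul (γ y) (mul x z) -
            (mul (mul z x) (γ y) - mul (mul x z) (γ y))) +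
        (mul (γ z) (mul x y) - mul (γ z) (mul y x) -
            (mul (mul x y) (γ z) - mul (mul y x) (γ z))) =
        -(((mul (mul x y) (γ z) - mul (γ x) (mul y z)) -
            (mul (mul x z) (γ y) - mul (γ x) (mul z y))) +
          ((mul (mul y z) (γ x) - mul (γ y) (mul z x)) -
            (mul (mul y x) (γ z) - mul (γ y) (mul x z))) +
          ((mul (mul z x) (γ y) - mul (γ z) (mul x y)) -
            (mul (mul z y) (γ x) - mul (γ z) (mul y x)))) := by abel
    rw [e, h1, h2, h3]
    abel
end

section
/- For an invertible linear map α on a vector space V, define on gl(V) the bracket [P,Q]_α := αPα⁻¹Qα⁻¹ − αQα⁻¹Pα⁻¹ and Ad_α P := αPα⁻¹. Then (gl(V), [·,·]_α, Ad_α) is a hom-Lie algebra: [·,·]_α is bilinear and skew-symmetric, Ad_α([P,Q]_α) = [Ad_α P, Ad_α Q]_α, and the hom-Jacobi identity [Ad_α P,[Q,R]_α]_α + [Ad_α Q,[R,P]_α]_α + [Ad_α R,[P,Q]_α]_α = 0 holds. -/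
/-- For an invertible linear map `α` on `V`, the bracket
`[P,Q]_α = αPα⁻¹Qα⁻¹ - αQα⁻¹Pα⁻¹` together with `Ad_α P = αPα⁻¹` makes
`gl(V)` a hom-Lie algebra: the bracket is bilinear, skew-symmetric,
`Ad_α`-equivariant, and satisfies the hom-Jacobi identity. -/
theorem gl_hom_lie_algebra
    {K V : Type*} [Field K] [AddCommGroup V] [Module K V] (α : V ≃ₗ[K] V) :
    let a : Module.End K V := α.toLinearMap
    let ai : Module.End K V := α.symm.toLinearMap
    let br : Module.End K V → Module.End K V → Module.End K V :=
      fun P Q => a * P * ai * Q * ai - a * Q * ai * P * ai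
    let Ad : Module.End K V → Module.End K V := fun P => a * P * ai
    (∀ P Q, br P Q = - br Q P) ∧
    (∀ P P' Q, br (P + P') Q = br P Q + br P' Q) ∧
    (∀ P Q Q', br P (Q + Q') = br P Q + br P Q') ∧
    (∀ (c : K) P Q, br (c • P) Q = c • br P Q) ∧
    (∀ (c : K) P Q, br P (c • Q) = c • br P Q) ∧
    (∀ P Q, Ad (br P Q) = br (Ad P) (Ad Q)) ∧
    (∀ P Q R,
      br (Ad P) (br Q R) + br (Ad Q) (br R P) + br (Ad R) (br P Q) = 0) := by
  intro a ai br Ad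
  refine ⟨fun P Q => by simp only [br]; abel,
    fun P P' Q => by
      ext v
      simp [br, a, ai, Module.End.mul_apply, map_add]
      abel,
    fun P Q Q' => by
      ext v
      simp [br, a, ai, Module.End.mul_apply, map_add]
      abel,
    fun c P Q => by
      ext v
      simp [br, a, ai, Module.End.mul_apply, map_smul, smul_sub],
    fun c P Q => by
      ext v
      simp [br, a, ai, Module.End.mul_apply, map_smul, smul_sub],
    fun P Q => by
      ext v
      simp [br, Ad, a, ai, Module.End.mul_apply, map_sub],
    fun P Q R => by
      ext v
      simp [br, Ad, a, ai, Module.End.mul_apply, map_sub, map_add]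
      abel⟩
end

section
/- Define Ad_α: gl(V) → gl(V) by Ad_α(P) = αPα⁻¹ and the composition P∘Q for P,Q ∈ gl(V) by P∘Q = αPα⁻¹Qα⁻¹. Then Ad_α(P∘Q) = (Ad_α P)∘(Ad_α Q), and the hom-right-symmetry identity (P∘Q)∘Ad_α(W) − Ad_α(P)∘(Q∘W) = (P∘W)∘Ad_α(Q) − Ad_α(P)∘(W∘Q) holds for all P,Q,W ∈ gl(V). -/
/-- With `Ad_α P = αPα⁻¹` and the twisted composition `P∘Q = αPα⁻¹Qα⁻¹` on
`gl(V)`, one has `Ad_α(P∘Q) = (Ad_α P)∘(Ad_α Q)` and the hom-right-symmetry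
identity `(P∘Q)∘Ad_α W - Ad_α P∘(Q∘W) = (P∘W)∘Ad_α Q - Ad_α P∘(W∘Q)`. -/
theorem gl_twisted_composition_hom_right_symmetric
    {K V : Type*} [Field K] [AddCommGroup V] [Module K V] (α : V ≃ₗ[K] V) :
    let a : Module.End K V := α.toLinearMap
    let ai : Module.End K V := α.symm.toLinearMap
    let Ad : Module.End K V → Module.End K V := fun P => a * P * ai
    let comp : Module.End K V → Module.End K V → Module.End K V :=
      fun P Q => a * P * ai * Q * ai
    (∀ P Q, Ad (comp P Q) = comp (Ad P) (Ad Q)) ∧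
    (∀ P Q W,
      comp (comp P Q) (Ad W) - comp (Ad P) (comp Q W)
        = comp (comp P W) (Ad Q) - comp (Ad P) (comp W Q)) := by
  intro a ai Ad comp
  have h1 : ∀ x : Module.End K V, ai * (a * x) = x := by
    intro x; ext v; simp [a, ai, Module.End.mul_apply]
  have h2 : ∀ x : Module.End K V, a * (ai * x) = x := by
    intro x; ext v; simp [a, ai, Module.End.mul_apply]
  constructor
  · intro P Q
    simp only [Ad, comp, mul_assoc, h1, h2, sub_self]
  · intro P Q W
    simp only [Ad, comp, mul_assoc, h1, h2, sub_self]
end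

section
/- Let (V,[·,·],α) be a regular hom-Lie algebra and N a hom-Nijenhuis operator on it (i.e., αNα⁻¹ = N and [Nx,Ny] = N[Nα⁻¹x,y] + N[x,Nα⁻¹y] − N²[α⁻¹x,α⁻¹y] for all x,y). Then for all natural numbers i,j and all x,y ∈ V: [Nⁱx, Nʲy] − Nⁱ[x, Nʲα⁻ⁱy] − Nʲ[Nⁱα⁻ʲx, y] + N^{i+j}[α⁻ʲx, α⁻ⁱy] = 0, where Nⁱ denotes the i-fold composition of N and α⁻ⁱ the i-fold composition of α⁻¹. -/
/-- For a hom-Nijenhuis operator `N` on a regular hom-Lie algebra `(V,[·,·],α)`: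
`[Nⁱx,Nʲy] - Nⁱ[x,Nʲα⁻ⁱy] - Nʲ[Nⁱα⁻ʲx,y] + N^{i+j}[α⁻ʲx,α⁻ⁱy] = 0`
for all `i j : ℕ` and `x y : V`. -/
theorem hom_nijenhuis_powers
    {K V : Type*} [Field K] [AddCommGroup V] [Module K V]
    (b : V →ₗ[K] V →ₗ[K] V) (α : V ≃ₗ[K] V)
    (hskew : ∀ x y : V, b x y = - b y x)
    (hmult : ∀ x y : V, α (b x y) = b (α x) (α y))
    (hjac : ∀ x y z : V, b (α x) (b y z) + b (α y) (b z x) + b (α z) (b x y) = 0)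
    (N : Module.End K V)
    (hN : ∀ x : V, α (N (α.symm x)) = N x)
    (hNij : ∀ x y : V,
      b (N x) (N y)
        = N (b (N (α.symm x)) y) + N (b x (N (α.symm y)))
          - N (N (b (α.symm x) (α.symm y)))) :
    ∀ (i j : ℕ) (x y : V),
      b ((N ^ i) x) ((N ^ j) y)
        - (N ^ i) (b x ((N ^ j) ((α.symm.toLinearMap ^ i) y)))
        - (N ^ j) (b ((N ^ i) ((α.symm.toLinearMap ^ j) x)) y)
        + (N ^ (i + j)) (b ((α.symm.toLinearMap ^ j) x)
            ((α.symm.toLinearMap ^ i) y)) = 0 := by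
  set σ : Module.End K V := α.symm.toLinearMap with hσdef
  -- N commutes with σ
  have hc1 : ∀ x : V, N (σ x) = σ (N x) := by
    intro x
    calc N (σ x) = α.symm (α (N (α.symm x))) := (α.symm_apply_apply _).symm
    _ = σ (N x) := by rw [hN]; rfl
  -- N commutes with σ^n
  have hcσ : ∀ (n : ℕ) (x : V), N ((σ ^ n) x) = (σ ^ n) (N x) := by
    intro n
    induction n with
    | zero => intro x; simp
    | succ k ih =>
      intro x
      rw [pow_succ, Module.End.mul_apply, Module.End.mul_apply, ih, hc1]
  -- N^m commutes with σ^n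
  have hcc : ∀ (m n : ℕ) (x : V), (N ^ m) ((σ ^ n) x) = (σ ^ n) ((N ^ m) x) := by
    intro m n
    induction m with
    | zero => intro x; simp
    | succ k ih =>
      intro x
      rw [pow_succ, Module.End.mul_apply, Module.End.mul_apply, hcσ, ih]
  -- rewrite hNij in terms of σ
  have hNij' : ∀ x y : V,
      b (N x) (N y)
        = N (b (N (σ x)) y) + N (b x (N (σ y))) - N (N (b (σ x) (σ y))) := by
    intro x y; exact hNij x y
  -- P(1,j)
  have P1 : ∀ (j : ℕ) (x y : V),
      b (N x) ((N ^ j) y)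
        = N (b x ((N ^ j) (σ y))) + (N ^ j) (b (N ((σ ^ j) x)) y)
          - (N ^ (j + 1)) (b ((σ ^ j) x) (σ y)) := by
    intro j
    induction j with
    | zero => intro x y; simp
    | succ k ih =>
      intro x y
      have hNNk : ∀ v : V, N ((N ^ k) v) = (N ^ k) (N v) := by
        intro v
        rw [← Module.End.mul_apply, ← Module.End.mul_apply, ← pow_succ', ← pow_succ]
      have e1 : ((N : Module.End K V) ^ (k + 1)) y = N ((N ^ k) y) := by
        rw [pow_succ', Module.End.mul_apply]
      rw [e1, hNij' x ((N ^ k) y)]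
      have t1 : b (N (σ x)) ((N ^ k) y)
          = N (b (σ x) ((N ^ k) (σ y))) + (N ^ k) (b (N ((σ ^ k) (σ x))) y)
            - (N ^ (k + 1)) (b ((σ ^ k) (σ x)) (σ y)) := ih (σ x) y
      have hσNk : σ ((N ^ k) y) = (N ^ k) (σ y) := by
        simpa [pow_one] using (hcc k 1 y).symm
      have hNσk : N (σ ((N ^ k) y)) = N ((N ^ k) (σ y)) := by rw [hσNk]
      rw [t1, hNσk, hσNk]
      have e2 : ∀ v : V, ((N : Module.End K V) ^ (k + 1)) v = N ((N ^ k) v) := by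
        intro v; rw [pow_succ', Module.End.mul_apply]
      have e3 : ∀ v : V, ((N : Module.End K V) ^ (k + 1 + 1)) v = N ((N ^ (k + 1)) v) := by
        intro v; rw [pow_succ', Module.End.mul_apply]
      have e4 : ∀ v : V, ((σ : Module.End K V) ^ (k + 1)) v = (σ ^ k) (σ v) := by
        intro v; rw [pow_succ, Module.End.mul_apply]
      simp only [map_add, map_sub, e2, e3, e4, ← hNNk]
      abel
  -- P(i,j)
  have P : ∀ (i j : ℕ) (x y : V),
      b ((N ^ i) x) ((N ^ j) y)
        = (N ^ i) (b x ((N ^ j) ((σ ^ i) y))) + (N ^ j) (b ((N ^ i) ((σ ^ j) x)) y)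
          - (N ^ (i + j)) (b ((σ ^ j) x) ((σ ^ i) y)) := by
    intro i j
    induction i with
    | zero => intro x y; simp
    | succ k ih =>
      intro x y
      have e2 : ∀ v : V, ((N : Module.End K V) ^ (k + 1)) v = N ((N ^ k) v) := by
        intro v; rw [pow_succ', Module.End.mul_apply]
      have e4 : ∀ v : V, ((σ : Module.End K V) ^ (k + 1)) v = (σ ^ k) (σ v) := by
        intro v; rw [pow_succ, Module.End.mul_apply]
      rw [e2 x, P1 j ((N ^ k) x) y]
      have t1 : b ((N ^ k) x) ((N ^ j) (σ y))
          = (N ^ k) (b x ((N ^ j) ((σ ^ k) (σ y)))) + (N ^ j) (b ((N ^ k) ((σ ^ j) x)) (σ y))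
            - (N ^ (k + j)) (b ((σ ^ j) x) ((σ ^ k) (σ y))) := ih x (σ y)
      have hσjNk : (σ ^ j) ((N ^ k) x) = (N ^ k) ((σ ^ j) x) := (hcc k j x).symm
      rw [t1, hσjNk]
      have e5 : ∀ v : V, ((N : Module.End K V) ^ (j + 1)) v = N ((N ^ j) v) := by
        intro v; rw [pow_succ', Module.End.mul_apply]
      have e6 : ∀ v : V, ((N : Module.End K V) ^ (k + 1 + j)) v = N ((N ^ (k + j)) v) := by
        intro v
        have h : k + 1 + j = (k + j) + 1 := by omega
        rw [h, pow_succ', Module.End.mul_apply]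
      simp only [map_add, map_sub, e2, e4, e5, e6]
      abel
  intro i j x y
  rw [P i j x y]
  abel
end

section
/- Let (V,[·,·],α) be a hom-Lie algebra, ρ: V → gl(W) a representation on W with respect to β ∈ GL(W), and T: W → V a hom-O-operator, i.e., T∘β = α∘T and [Tu,Tv] = T(ρ(T(β⁻¹u))v − ρ(T(β⁻¹v))u) for all u,v ∈ W. Define u*v := ρ(T(β⁻¹v))(u). Then (W,*,β) is a hom-right-symmetric algebra: β(u*v) = β(u)*β(v) and (u*v)*β(w) − β(u)*(v*w) = (u*w)*β(v) − β(u)*(w*v) for all u,v,w. -/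
/-- A hom-O-operator `T : W → V` for a representation `ρ` of a hom-Lie algebra
`(V,[·,·],α)` on `W` with respect to invertible `β` induces a
hom-right-symmetric algebra `(W, *, β)` with `u * v := ρ(T(β⁻¹v))(u)`. -/
theorem hom_O_operator_gives_hom_right_symmetric
    {K V W : Type*} [Field K] [AddCommGroup V] [Module K V]
    [AddCommGroup W] [Module K W]
    (b : V →ₗ[K] V →ₗ[K] V) (α : V ≃ₗ[K] V)
    (hskew : ∀ x y : V, b x y = - b y x)
    (hmult : ∀ x y : V, α (b x y) = b (α x) (α y))
    (hjac : ∀ x y z : V, b (α x) (b y z) + b (α y) (b z x) + b (α z) (b x y) = 0)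
    (β : W ≃ₗ[K] W) (ρ : V →ₗ[K] Module.End K W)
    (hrep1 : ∀ (x : V) (w : W), ρ (α x) (β w) = β (ρ x w))
    (hrep2 : ∀ (x y : V) (w : W),
      ρ (b x y) (β w) = ρ (α x) (ρ y w) - ρ (α y) (ρ x w))
    (T : W →ₗ[K] V)
    (hTβ : ∀ u : W, T (β u) = α (T u))
    (hTO : ∀ u v : W,
      b (T u) (T v) = T (ρ (T (β.symm u)) v - ρ (T (β.symm v)) u)) :
    (∀ u v : W,
      β (ρ (T (β.symm v)) u) = ρ (T (β.symm (β v))) (β u)) ∧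
    (∀ u v w : W,
      ρ (T (β.symm (β w))) (ρ (T (β.symm v)) u)
        - ρ (T (β.symm (ρ (T (β.symm w)) v))) (β u)
      = ρ (T (β.symm (β v))) (ρ (T (β.symm w)) u)
        - ρ (T (β.symm (ρ (T (β.symm v)) w))) (β u)) := by

  have hTv : ∀ v : W, T v = α (T (β.symm v)) := by
    intro v
    rw [← hTβ, β.apply_symm_apply]
  constructor
  · intro u v
    rw [β.symm_apply_apply, hTv v, hrep1]
  · intro u v w
    rw [β.symm_apply_apply, β.symm_apply_apply]
    set x := T (β.symm v) with hx
    set y := T (β.symm w) with hy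
    have hbxy : T (ρ x w) - T (ρ y v) = α (b x y) := by
      have h := hTO v w
      rw [hTv v, hTv w, ← hmult, ← hx, ← hy, map_sub] at h
      exact h.symm
    have h1 : ρ (T (β.symm (ρ y v))) (β u) - ρ (T (β.symm (ρ x w))) (β u)
        = - (ρ (α x) (ρ y u) - ρ (α y) (ρ x u)) := by
      have : T (β.symm (ρ y v)) - T (β.symm (ρ x w)) = - b x y := by
        apply α.injective
        rw [map_sub, ← hTβ, ← hTβ, β.apply_symm_apply, β.apply_symm_apply,
          map_neg, ← hbxy]
        abel
      calc ρ (T (β.symm (ρ y v))) (β u) - ρ (T (β.symm (ρ x w))) (β u)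
          = ρ (T (β.symm (ρ y v)) - T (β.symm (ρ x w))) (β u) := by
            simp [map_sub]
        _ = ρ (- b x y) (β u) := by rw [this]
        _ = - (ρ (α x) (ρ y u) - ρ (α y) (ρ x u)) := by
            rw [map_neg]; simp [hrep2]
    rw [hTv v, hTv w, ← hx, ← hy]
    rw [sub_eq_sub_iff_sub_eq_sub, h1, neg_sub]
end

section
/- Let (V,[·,·],α) be a hom-Lie algebra with α invertible, ρ: V → gl(W) a representation with respect to invertible β ∈ GL(W). Form the semidirect product hom-Lie algebra V⋉W with underlying space V⊕W, bracket [(x,u),(y,v)] = ([x,y], ρ(x)v − ρ(y)u), and structure map α⊕β. Then a linear map T: W → V satisfies T∘β = α∘T and [Tu,Tv] = T(ρ(T(β⁻¹u))v − ρ(T(β⁻¹v))u) for all u,v (i.e., T is a hom-O-operator) if and only if the endomorphism N of V⊕W given by N(x,u) = (Tu, 0) is a hom-Nijenhuis operator on V⋉W. -/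
/-- `T : W → V` is a hom-O-operator (i.e. `T∘β = α∘T` and
`[Tu,Tv] = T(ρ(T(β⁻¹u))v - ρ(T(β⁻¹v))u)`) iff `N(x,u) = (Tu,0)` is a
hom-Nijenhuis operator on the semidirect product hom-Lie algebra `V ⋉ W`,
whose bracket is `[(x,u),(y,v)] = ([x,y], ρ(x)v - ρ(y)u)` and whose structure
map is `α ⊕ β`. -/
theorem hom_O_operator_iff_hom_nijenhuis_semidirect
    {K V W : Type*} [Field K] [AddCommGroup V] [Module K V]
    [AddCommGroup W] [Module K W]
    (b : V →ₗ[K] V →ₗ[K] V) (α : V ≃ₗ[K] V)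
    (hskew : ∀ x y : V, b x y = - b y x)
    (hmult : ∀ x y : V, α (b x y) = b (α x) (α y))
    (hjac : ∀ x y z : V, b (α x) (b y z) + b (α y) (b z x) + b (α z) (b x y) = 0)
    (β : W ≃ₗ[K] W) (ρ : V →ₗ[K] Module.End K W)
    (hrep1 : ∀ (x : V) (w : W), ρ (α x) (β w) = β (ρ x w))
    (hrep2 : ∀ (x y : V) (w : W),
      ρ (b x y) (β w) = ρ (α x) (ρ y w) - ρ (α y) (ρ x w))
    (T : W →ₗ[K] V) :
    let bp : V × W → V × W → V × W :=
      fun p q => (b p.1 q.1, ρ p.1 q.2 - ρ q.1 p.2)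
    let γ : V × W → V × W := fun p => (α p.1, β p.2)
    let γi : V × W → V × W := fun p => (α.symm p.1, β.symm p.2)
    let Nf : V × W → V × W := fun p => (T p.2, 0)
    ((∀ u : W, T (β u) = α (T u)) ∧
     (∀ u v : W,
        b (T u) (T v) = T (ρ (T (β.symm u)) v - ρ (T (β.symm v)) u)))
    ↔
    ((∀ p : V × W, γ (Nf (γi p)) = Nf p) ∧
     (∀ p q : V × W,
        bp (Nf p) (Nf q)
          = Nf (bp (Nf (γi p)) q) + Nf (bp p (Nf (γi q)))
            - Nf (Nf (bp (γi p) (γi q))))) := by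
  intro bp γ γi Nf
  constructor
  · rintro ⟨h1, h2⟩
    refine ⟨fun p => ?_, fun p q => ?_⟩
    · simp only [Nf, γ, γi]
      refine Prod.ext ?_ (by simp)
      have := h1 (β.symm p.2)
      simp only [β.apply_symm_apply] at this
      simpa using this.symm
    · simp only [Nf, bp, γi, Prod.mk_add_mk, Prod.mk_sub_mk]
      refine Prod.ext ?_ (by simp)
      simp only [map_zero, map_sub, map_neg]
      have := h2 p.2 q.2
      simp only [map_sub] at this
      simpa [sub_eq_add_neg] using this
  · rintro ⟨h1, h2⟩
    refine ⟨fun u => ?_, fun u v => ?_⟩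
    · have := congrArg Prod.fst (h1 ((0 : V), β u))
      simp only [Nf, γ, γi, β.symm_apply_apply] at this
      exact this.symm
    · have := congrArg Prod.fst (h2 ((0 : V), u) ((0 : V), v))
      simp only [Nf, bp, γi, Prod.mk_add_mk, Prod.mk_sub_mk, map_zero, map_sub,
        map_neg] at this
      simpa [map_sub, sub_eq_add_neg] using this
end

section
/- Let (V,[·,·],α) be a regular hom-Lie algebra and N a hom-Nijenhuis operator (αNα⁻¹=N, [Nx,Ny] = N[Nα⁻¹x,y]+N[x,Nα⁻¹y]−N²[α⁻¹x,α⁻¹y]). For t ∈ k define [x,y]_t := [x,y] + t ω(x,y) with ω(x,y) = [x,Nα⁻¹y] + [Nα⁻¹x,y] − N[α⁻¹x,α⁻¹y]. Then for every t, (α + tN)[x,y]_t = [(α+tN)(x), (α+tN)(y)] for all x,y ∈ V. -/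
/-- A hom-Nijenhuis operator `N` on a regular hom-Lie algebra gives a trivial
deformation: with `ω(x,y) = [x,Nα⁻¹y] + [Nα⁻¹x,y] - N[α⁻¹x,α⁻¹y]` and
`[x,y]_t = [x,y] + t·ω(x,y)`, one has
`(α + tN)[x,y]_t = [(α+tN)x, (α+tN)y]` for every `t`. -/
theorem hom_nijenhuis_trivial_deformation
    {K V : Type*} [Field K] [AddCommGroup V] [Module K V]
    (b : V →ₗ[K] V →ₗ[K] V) (α : V ≃ₗ[K] V)
    (hskew : ∀ x y : V, b x y = - b y x)
    (hmult : ∀ x y : V, α (b x y) = b (α x) (α y))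
    (hjac : ∀ x y z : V, b (α x) (b y z) + b (α y) (b z x) + b (α z) (b x y) = 0)
    (N : V →ₗ[K] V)
    (hN : ∀ x : V, α (N (α.symm x)) = N x)
    (hNij : ∀ x y : V,
      b (N x) (N y)
        = N (b (N (α.symm x)) y) + N (b x (N (α.symm y)))
          - N (N (b (α.symm x) (α.symm y)))) :
    let ω : V → V → V := fun x y =>
      b x (N (α.symm y)) + b (N (α.symm x)) y - N (b (α.symm x) (α.symm y))
    ∀ (t : K) (x y : V),
      α (b x y + t • ω x y) + t • N (b x y + t • ω x y)
        = b (α x + t • N x) (α y + t • N y) := by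
  intro ω t x y
  have h2 : b (α.symm x) (α.symm y) = α.symm (b x y) := by
    apply α.injective
    rw [hmult]; simp
  have h3 : α (N (b (α.symm x) (α.symm y))) = N (b x y) := by
    rw [h2]; exact hN _
  have h4 : α (b x (N (α.symm y))) = b (α x) (N y) := by
    rw [hmult, hN]
  have h5 : α (b (N (α.symm x)) y) = b (N x) (α y) := by
    rw [hmult, hN]
  have h6 : N (ω x y) = b (N x) (N y) := by
    show N (b x (N (α.symm y)) + b (N (α.symm x)) y - N (b (α.symm x) (α.symm y)))
      = b (N x) (N y)
    rw [map_sub, map_add, hNij]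
    abel
  have hω : α (ω x y) = b (α x) (N y) + b (N x) (α y) - N (b x y) := by
    show α (b x (N (α.symm y)) + b (N (α.symm x)) y - N (b (α.symm x) (α.symm y)))
      = _
    rw [map_sub, map_add, h3, h4, h5]
  simp only [map_add, map_smul, LinearMap.add_apply, LinearMap.smul_apply,
    LinearMap.map_add, LinearMap.map_smul, hω, h6, hmult, smul_add, smul_sub]
  abel
end

section
/- Let (V,[·,·],α) be a regular hom-Lie algebra and N a hom-Nijenhuis operator. Then ω(x,y) := [x,Nα⁻¹y] + [Nα⁻¹x,y] − N[α⁻¹x,α⁻¹y] is skew-symmetric, satisfies ω(αx,αy) = α ω(x,y), and satisfies the hom-Jacobi identity ω(α(x), ω(y,z)) + ω(α(y), ω(z,x)) + ω(α(z), ω(x,y)) = 0, so (V, ω, α) is a hom-Lie algebra. -/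
/-- For a hom-Nijenhuis operator `N` on a regular hom-Lie algebra `(V,[·,·],α)`,
the map `ω(x,y) = [x,Nα⁻¹y] + [Nα⁻¹x,y] - N[α⁻¹x,α⁻¹y]` is skew-symmetric,
satisfies `ω(αx,αy) = α ω(x,y)` and the hom-Jacobi identity, so `(V,ω,α)`
is a hom-Lie algebra. -/
theorem hom_nijenhuis_deformed_bracket_hom_lie
    {K V : Type*} [Field K] [AddCommGroup V] [Module K V]
    (b : V →ₗ[K] V →ₗ[K] V) (α : V ≃ₗ[K] V)
    (hskew : ∀ x y : V, b x y = - b y x)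
    (hmult : ∀ x y : V, α (b x y) = b (α x) (α y))
    (hjac : ∀ x y z : V, b (α x) (b y z) + b (α y) (b z x) + b (α z) (b x y) = 0)
    (N : V →ₗ[K] V)
    (hN : ∀ x : V, α (N (α.symm x)) = N x)
    (hNij : ∀ x y : V,
      b (N x) (N y)
        = N (b (N (α.symm x)) y) + N (b x (N (α.symm y)))
          - N (N (b (α.symm x) (α.symm y)))) :
    let ω : V → V → V := fun x y =>
      b x (N (α.symm y)) + b (N (α.symm x)) y - N (b (α.symm x) (α.symm y))
    (∀ x y : V, ω x y = - ω y x) ∧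
    (∀ x y : V, ω (α x) (α y) = α (ω x y)) ∧
    (∀ x y z : V, ω (α x) (ω y z) + ω (α y) (ω z x) + ω (α z) (ω x y) = 0) := by
  have hNa : ∀ u : V, α (N u) = N (α u) := fun u => by
    have := hN (α u); simpa using this
  have hNs : ∀ u : V, α.symm (N u) = N (α.symm u) := fun u => by
    have := congrArg α.symm (hN u); simpa using this.symm
  have hbs : ∀ u v : V, α.symm (b u v) = b (α.symm u) (α.symm v) := fun u v => by
    have := congrArg α.symm (hmult (α.symm u) (α.symm v)); simpa using this.symm
  intro ω
  refine ⟨?_, ?_, ?_⟩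
  · intro x y
    simp only [ω, hskew x (N (α.symm y)), hskew (N (α.symm x)) y,
      hskew (α.symm x) (α.symm y), map_neg]
    abel
  · intro x y
    simp only [ω, map_add, map_sub, hmult, hN, hNa, LinearEquiv.symm_apply_apply,
      LinearEquiv.apply_symm_apply]
  · intro x y z
    simp only [ω, map_add, map_sub, LinearMap.add_apply, LinearMap.sub_apply,
      hNs, hbs, LinearEquiv.symm_apply_apply]
    linear_combination (norm :=
        (simp only [map_add, map_sub, map_zero, LinearMap.add_apply, LinearMap.sub_apply,
          hN, hNs, hbs, LinearEquiv.apply_symm_apply, LinearEquiv.symm_apply_apply]; abel))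
      (- congrArg (⇑(b (α x))) (hNij (α.symm y) (α.symm z))
       - congrArg (⇑(b (α y))) (hNij (α.symm z) (α.symm x))
       - congrArg (⇑(b (α z))) (hNij (α.symm x) (α.symm y))
       - hNij x (b (α.symm y) (α.symm z))
       - hNij y (b (α.symm z) (α.symm x))
       - hNij z (b (α.symm x) (α.symm y))
       + hjac x (N (α.symm y)) (N (α.symm z))
       + hjac y (N (α.symm z)) (N (α.symm x))
       + hjac z (N (α.symm x)) (N (α.symm y))
       - congrArg (⇑N) (hjac (N (α.symm (α.symm x))) (α.symm y) (α.symm z))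
       - congrArg (⇑N) (hjac (N (α.symm (α.symm y))) (α.symm z) (α.symm x))
       - congrArg (⇑N) (hjac (N (α.symm (α.symm z))) (α.symm x) (α.symm y))
       + congrArg (⇑N) (congrArg (⇑N)
          (hjac (α.symm (α.symm x)) (α.symm (α.symm y)) (α.symm (α.symm z)))))
end

section
/- Let (V,[·,·],α) be a hom-Lie algebra and ω ∈ Hom(Λ²V,V). The bracket [x,y]_t := [x,y] + t ω(x,y) defines a hom-Lie algebra (V,[·,·]_t,α) for every scalar t if and only if: (a) ω(αx,αy) = α ω(x,y); (b) [ω(x,y),α(z)] + ω([x,y],α(z)) + [ω(y,z),α(x)] + ω([y,z],α(x)) + [ω(z,x),α(y)] + ω([z,x],α(y)) = 0; and (c) ω(ω(x,y),α(z)) + ω(ω(y,z),α(x)) + ω(ω(z,x),α(y)) = 0, for all x,y,z ∈ V. -/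
/-- `[x,y]_t := [x,y] + t ω(x,y)` defines a hom-Lie algebra `(V,[·,·]_t,α)`
for every scalar `t` iff (a) `ω(αx,αy) = α ω(x,y)`, (b) the mixed cocycle
condition, and (c) the hom-Jacobi identity for `ω` hold. -/
theorem deformation_hom_lie_iff
    {K V : Type*} [Field K] [CharZero K] [AddCommGroup V] [Module K V]
    (b : V →ₗ[K] V →ₗ[K] V) (α : V ≃ₗ[K] V)
    (hskewb : ∀ x y : V, b x y = - b y x)
    (hmultb : ∀ x y : V, α (b x y) = b (α x) (α y))
    (hjacb : ∀ x y z : V, b (α x) (b y z) + b (α y) (b z x) + b (α z) (b x y) = 0)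
    (ω : V →ₗ[K] V →ₗ[K] V)
    (hskewω : ∀ x y : V, ω x y = - ω y x) :
    let bt : K → V → V → V := fun t x y => b x y + t • ω x y
    ((∀ t : K,
        (∀ x y : V, α (bt t x y) = bt t (α x) (α y)) ∧
        (∀ x y z : V,
          bt t (α x) (bt t y z) + bt t (α y) (bt t z x)
            + bt t (α z) (bt t x y) = 0)))
    ↔
    ((∀ x y : V, ω (α x) (α y) = α (ω x y)) ∧
     (∀ x y z : V,
        b (ω x y) (α z) + ω (b x y) (α z)
          + b (ω y z) (α x) + ω (b y z) (α x)
          + b (ω z x) (α y) + ω (b z x) (α y) = 0) ∧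
     (∀ x y z : V,
        ω (ω x y) (α z) + ω (ω y z) (α x) + ω (ω z x) (α y) = 0)) := by
  intro bt
  -- reorientation lemmas via skew-symmetry
  have hMB : ∀ x y z : V,
      b (α x) (ω y z) + ω (α x) (b y z) + b (α y) (ω z x) + ω (α y) (b z x)
        + b (α z) (ω x y) + ω (α z) (b x y)
      = -(b (ω x y) (α z) + ω (b x y) (α z) + b (ω y z) (α x) + ω (b y z) (α x)
          + b (ω z x) (α y) + ω (b z x) (α y)) := by
    intro x y z
    rw [hskewb (ω x y), hskewω (b x y), hskewb (ω y z), hskewω (b y z),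
      hskewb (ω z x), hskewω (b z x)]
    abel
  have hQB : ∀ x y z : V,
      ω (α x) (ω y z) + ω (α y) (ω z x) + ω (α z) (ω x y)
        = -(ω (ω x y) (α z) + ω (ω y z) (α x) + ω (ω z x) (α y)) := by
    intro x y z
    rw [hskewω (ω x y), hskewω (ω y z), hskewω (ω z x)]
    abel
  have hexp : ∀ (t : K) (x y z : V),
      bt t (α x) (bt t y z) + bt t (α y) (bt t z x) + bt t (α z) (bt t x y)
      = (b (α x) (b y z) + b (α y) (b z x) + b (α z) (b x y))
        + t • (b (α x) (ω y z) + ω (α x) (b y z) + b (α y) (ω z x)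
              + ω (α y) (b z x) + b (α z) (ω x y) + ω (α z) (b x y))
        + (t * t) • (ω (α x) (ω y z) + ω (α y) (ω z x) + ω (α z) (ω x y)) := by
    intro t x y z
    simp only [bt, map_add, map_smul, smul_add, smul_smul]
    module
  constructor
  · intro h
    have ha : ∀ x y : V, ω (α x) (α y) = α (ω x y) := by
      intro x y
      have h1 := (h 1).1 x y
      simp only [bt, one_smul, map_add] at h1
      rw [hmultb] at h1
      exact (add_left_cancel h1).symm
    have e1 : ∀ x y z : V,
        (b (α x) (b y z) + b (α y) (b z x) + b (α z) (b x y))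
        + (1:K) • (b (α x) (ω y z) + ω (α x) (b y z) + b (α y) (ω z x)
              + ω (α y) (b z x) + b (α z) (ω x y) + ω (α z) (b x y))
        + ((1:K) * 1) • (ω (α x) (ω y z) + ω (α y) (ω z x) + ω (α z) (ω x y)) = 0 := by
      intro x y z
      rw [← hexp 1 x y z]
      exact (h 1).2 x y z
    have e2 : ∀ x y z : V,
        (b (α x) (b y z) + b (α y) (b z x) + b (α z) (b x y))
        + (-1:K) • (b (α x) (ω y z) + ω (α x) (b y z) + b (α y) (ω z x)
              + ω (α y) (b z x) + b (α z) (ω x y) + ω (α z) (b x y))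
        + ((-1:K) * (-1)) • (ω (α x) (ω y z) + ω (α y) (ω z x) + ω (α z) (ω x y)) = 0 := by
      intro x y z
      rw [← hexp (-1) x y z]
      exact (h (-1)).2 x y z
    have hM : ∀ x y z : V,
        b (α x) (ω y z) + ω (α x) (b y z) + b (α y) (ω z x)
          + ω (α y) (b z x) + b (α z) (ω x y) + ω (α z) (b x y) = 0 := by
      intro x y z
      have := e1 x y z
      have := e2 x y z
      linear_combination (norm := module) ((2:K)⁻¹) • e1 x y z - ((2:K)⁻¹) • e2 x y z
    have hQ : ∀ x y z : V,
        ω (α x) (ω y z) + ω (α y) (ω z x) + ω (α z) (ω x y) = 0 := by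
      intro x y z
      linear_combination (norm := module) ((2:K)⁻¹) • e1 x y z + ((2:K)⁻¹) • e2 x y z
        - hjacb x y z
    refine ⟨ha, ?_, ?_⟩
    · intro x y z
      have := hM x y z
      rw [hMB x y z] at this
      exact (neg_eq_zero.mp this)
    · intro x y z
      have := hQ x y z
      rw [hQB x y z] at this
      exact (neg_eq_zero.mp this)
  · rintro ⟨ha, hb2, hc⟩ t
    constructor
    · intro x y
      simp only [bt, map_add, map_smul, ha, hmultb]
    · intro x y z
      rw [hexp t x y z, hjacb x y z, hMB x y z, hQB x y z, hb2 x y z, hc x y z]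
      simp
end
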